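/- Let q be an odd prime, a ≥ 1, and n ≥ 1 with (q-1) | n. Then the sequence (S_n(m) mod q^a)_{m≥1} is periodic with exact period q^(a+1). -/

import Mathlib

/-!
Write `T(N) = ∑_{i<N} i^n`. Fermat gives `T(q) ≡ q - 1 (mod q)`, and splitting `[0, qM)` into
`q` blocks of length `M` and expanding `(jM + r)^n` to first order gives `T(qM) ≡ q T(M) (mod qM)`
whenever `q ∣ M`: the linear term carries the factor `∑_{j<q} j`, divisible by the odd `q`.
Hence `S_n(q^(b+1)) ≡ (q - 1) q^b (mod q^(b+1))`.

Since `S_n(m + N) ≡ S_n(m) + S_n(N) (mod N)`, this makes `q^(a+1)` a period mod `q^a`. A smaller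
period `d` would make `gcd(d, q^(a+1)) = q^e` with `e ≤ a` a period as well, forcing
`q^a ∣ S_n(q^e)`, which the congruence above rules out.
-/

def S (n m : ℕ) : ℕ := ∑ i ∈ Finset.Icc 1 m, i ^ n

open Finset Function

theorem Function.Periodic.nat_gcd {α : Type*} {f : ℕ → α} {c d : ℕ} (hc : Periodic f c)
    (hd : Periodic f d) : Periodic f (c.gcd d) := by
  induction c, d using Nat.gcd.induction with
  | H0 d => simpa using hd
  | H1 c d _ ih =>
    have hmod : Periodic f (d % c) := fun x => by
      rw [← (hc.nat_mul (d / c)) (x + d % c), add_assoc, Nat.cast_id, Nat.mod_add_div', hd]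
    rw [Nat.gcd_rec]
    exact ih hmod hc

theorem Finset.sum_range_mul_eq_sum_sum {M : Type*} [AddCommMonoid M] (f : ℕ → M) (k N : ℕ) :
    ∑ i ∈ range (k * N), f i = ∑ j ∈ range k, ∑ r ∈ range N, f (j * N + r) := by
  induction k with
  | zero => simp
  | succ k ih => rw [Nat.succ_mul, sum_range_add, ih, sum_range_succ]

theorem Odd.dvd_sum_range_id {q : ℕ} (hq : Odd q) : q ∣ ∑ i ∈ range q, i := by
  obtain ⟨t, rfl⟩ := hq
  refine ⟨t, ?_⟩
  have := sum_range_id_mul_two (2 * t + 1)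
  rw [Nat.add_sub_cancel] at this
  nlinarith

theorem sum_range_mul_pow_modEq {q M : ℕ} (hq : Odd q) (hM : q ∣ M) (n : ℕ) :
    ∑ i ∈ range (q * M), i ^ n ≡ q * ∑ i ∈ range M, i ^ n [MOD q * M] := by
  rw [← ZMod.natCast_eq_natCast_iff, sum_range_mul_eq_sum_sum]
  push_cast
  -- first-order Taylor expansion: `(j M)² = 0` in `ZMod (q M)` since `q ∣ M`
  have htaylor : ∀ j r : ℕ, ((j : ZMod (q * M)) * M + r) ^ n
      = r ^ n + j * M * (r ^ (n - 1) * n) := fun j r => by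
    have hsq : ((j : ZMod (q * M)) * M) ^ 2 = 0 := by
      rw [mul_pow, sq (M : ZMod (q * M)), ← Nat.cast_mul, (ZMod.natCast_eq_zero_iff _ _).2
        (mul_dvd_mul_right hM M), mul_zero]
    have := sq_dvd_add_pow_sub_sub ((j : ZMod (q * M)) * M) (r : ZMod (q * M)) n
    rw [hsq, zero_dvd_iff, sub_sub, sub_eq_zero] at this
    rw [add_comm, this]
    ring
  have hgauss : (∑ j ∈ range q, (j : ZMod (q * M))) * M = 0 := by
    obtain ⟨s, hs⟩ := hq.dvd_sum_range_id
    rw [← Nat.cast_sum, hs, ← Nat.cast_mul, (ZMod.natCast_eq_zero_iff _ _).2 ⟨s, by ring⟩]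
  simp_rw [htaylor, sum_add_distrib, mul_assoc, ← mul_sum, ← sum_mul,
    ← mul_assoc _ (M : ZMod (q * M)), hgauss, zero_mul, add_zero, sum_const, card_range,
    nsmul_eq_mul]

theorem sum_range_pow_modEq_of_prime {q n : ℕ} (hq : q.Prime) (hn : n ≠ 0) (hqn : q - 1 ∣ n) :
    ∑ i ∈ range q, i ^ n ≡ q - 1 [MOD q] := by
  have := Fact.mk hq
  obtain ⟨p, rfl⟩ := Nat.exists_eq_add_one_of_ne_zero hq.ne_zero
  rw [Nat.add_sub_cancel] at hqn ⊢
  obtain ⟨k, rfl⟩ := hqn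
  rw [← ZMod.natCast_eq_natCast_iff, sum_range_succ']
  have hfermat : ∀ i ∈ range p, ((i + 1 : ℕ) : ZMod (p + 1)) ^ (p * k) = 1 := fun i hi => by
    have hne : ((i + 1 : ℕ) : ZMod (p + 1)) ≠ 0 := by
      rw [Ne, ZMod.natCast_eq_zero_iff]
      exact Nat.not_dvd_of_pos_of_lt (by omega) (by simp at hi; omega)
    have hflt := ZMod.pow_card_sub_one_eq_one hne
    rw [Nat.add_sub_cancel] at hflt
    rw [pow_mul, hflt, one_pow]
  push_cast at hfermat ⊢
  rw [sum_congr rfl hfermat]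
  simp [zero_pow hn]

theorem sum_range_prime_pow_modEq {q n : ℕ} (hq : q.Prime) (hodd : Odd q) (hn : n ≠ 0)
    (hqn : q - 1 ∣ n) (b : ℕ) :
    ∑ i ∈ range (q ^ (b + 1)), i ^ n ≡ (q - 1) * q ^ b [MOD q ^ (b + 1)] := by
  induction b with
  | zero => simpa using sum_range_pow_modEq_of_prime hq hn hqn
  | succ b ih =>
    rw [pow_succ' q (b + 1)]
    calc ∑ i ∈ range (q * q ^ (b + 1)), i ^ n
        ≡ q * ∑ i ∈ range (q ^ (b + 1)), i ^ n [MOD q * q ^ (b + 1)] :=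
          sum_range_mul_pow_modEq hodd (dvd_pow_self q b.succ_ne_zero) n
      _ ≡ q * ((q - 1) * q ^ b) [MOD q * q ^ (b + 1)] := ih.mul_left' q
      _ = (q - 1) * q ^ (b + 1) := by ring

theorem S_succ (n m : ℕ) : S n (m + 1) = S n m + (m + 1) ^ n :=
  sum_Icc_succ_top (by omega) _

theorem S_add_modEq (n m N : ℕ) : S n (m + N) ≡ S n m + S n N [MOD N] := by
  induction m with
  | zero => simp [S, Nat.ModEq.refl]
  | succ m ih =>
    rw [add_right_comm, S_succ, S_succ, add_right_comm _ _ (S n N)]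
    have hlast : (m + N + 1) ^ n ≡ (m + 1) ^ n [MOD N] := by
      rw [add_right_comm]
      exact Nat.add_modEq_right.pow n
    exact ih.add hlast

theorem S_eq_sum_range {n : ℕ} (hn : n ≠ 0) (N : ℕ) : S n N = ∑ i ∈ range (N + 1), i ^ n := by
  induction N with
  | zero => simp [S, hn]
  | succ N ih => rw [S_succ, ih, sum_range_succ _ (N + 1)]

theorem S_modEq_sum_range {n : ℕ} (hn : n ≠ 0) (N : ℕ) : S n N ≡ ∑ i ∈ range N, i ^ n [MOD N] := by
  rw [S_eq_sum_range hn, sum_range_succ]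
  exact Nat.ModEq.add_left _ (Nat.modEq_zero_iff_dvd.2 (dvd_pow_self N hn))

theorem S_prime_pow_modEq {q n : ℕ} (hq : q.Prime) (hodd : Odd q) (hn : n ≠ 0)
    (hqn : q - 1 ∣ n) (b : ℕ) : S n (q ^ (b + 1)) ≡ (q - 1) * q ^ b [MOD q ^ (b + 1)] :=
  (S_modEq_sum_range hn _).trans (sum_range_prime_pow_modEq hq hodd hn hqn b)

theorem not_S_prime_pow_modEq_zero {q n a e : ℕ} (hq : q.Prime) (hodd : Odd q) (hn : n ≠ 0)
    (hqn : q - 1 ∣ n) (ha : a ≠ 0) (hea : e ≤ a) : ¬ S n (q ^ e) ≡ 0 [MOD q ^ a] := by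
  intro h
  cases e with
  | zero =>
    have : q ^ a ∣ 1 := by simpa [S] using Nat.modEq_zero_iff_dvd.1 h
    exact (Nat.one_lt_pow ha hq.one_lt).ne' (Nat.eq_one_of_dvd_one this)
  | succ b =>
    have hdvd : q ^ b * q ∣ q ^ b * (q - 1) := by
      rw [← pow_succ, mul_comm]
      exact Nat.modEq_zero_iff_dvd.1 <|
        (S_prime_pow_modEq hq hodd hn hqn b).symm.trans (h.of_dvd (pow_dvd_pow q hea))
    have hq2 := hq.two_le
    have := Nat.le_of_dvd (by omega) ((Nat.mul_dvd_mul_iff_left (pow_pos hq.pos b)).1 hdvd)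
    omega

theorem S_add_prime_pow_succ_modEq {q n : ℕ} (hq : q.Prime) (hodd : Odd q) (hn : n ≠ 0)
    (hqn : q - 1 ∣ n) (a m : ℕ) : S n (m + q ^ (a + 1)) ≡ S n m [MOD q ^ a] := by
  have hq_dvd : q ^ a ∣ q ^ (a + 1) := pow_dvd_pow q a.le_succ
  have hfull : S n (q ^ (a + 1)) ≡ 0 [MOD q ^ a] :=
    ((S_prime_pow_modEq hq hodd hn hqn a).of_dvd hq_dvd).trans
      (Nat.modEq_zero_iff_dvd.2 (dvd_mul_left _ _))
  simpa using ((S_add_modEq n m _).of_dvd hq_dvd).trans (hfull.add_left _)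

theorem stmt13 (q a n : ℕ) (hq : q.Prime) (hodd : Odd q) (ha : 1 ≤ a) (hn : 1 ≤ n)
    (hd : q - 1 ∣ n) :
    (∀ m, 1 ≤ m → S n (m + q ^ (a + 1)) ≡ S n m [MOD q ^ a]) ∧
    ∀ d, 0 < d → d < q ^ (a + 1) →
      ¬ (∀ m, 1 ≤ m → S n (m + d) ≡ S n m [MOD q ^ a]) := by
  have hn0 : n ≠ 0 := by omega
  have hperiod : ∀ m, 1 ≤ m → S n (m + q ^ (a + 1)) ≡ S n m [MOD q ^ a] :=
    fun m _ => S_add_prime_pow_succ_modEq hq hodd hn0 hd a m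
  refine ⟨hperiod, fun d hd0 hdlt H => ?_⟩
  -- shifted by one, so that periodicity holds from `0` on
  set f : ℕ → ZMod (q ^ a) := fun m => S n (m + 1)
  have periodic_of : ∀ p, (∀ m, 1 ≤ m → S n (m + p) ≡ S n m [MOD q ^ a]) → Periodic f p :=
    fun p hp m => by
      simpa [f, add_right_comm, ZMod.natCast_eq_natCast_iff] using hp (m + 1) (by omega)
  obtain ⟨e, -, hg⟩ := (Nat.dvd_prime_pow hq).1 (Nat.gcd_dvd_right d (q ^ (a + 1)))
  have hea : e ≤ a := by
    have : q ^ e < q ^ (a + 1) := hg ▸ (Nat.gcd_le_left _ hd0).trans_lt hdlt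
    exact Nat.lt_succ_iff.1 ((Nat.pow_lt_pow_iff_right hq.one_lt).1 this)
  have hgcd_period : S n (q ^ e + q ^ a) ≡ S n (q ^ a) [MOD q ^ a] := by
    have := ((periodic_of d H).nat_gcd (periodic_of _ hperiod)) (q ^ a - 1)
    have hpos : 0 < q ^ a := pow_pos hq.pos a
    simp only [f, hg, ZMod.natCast_eq_natCast_iff, Nat.sub_add_cancel hpos] at this
    rwa [show q ^ a - 1 + q ^ e + 1 = q ^ e + q ^ a by omega] at this
  exact not_S_prime_pow_modEq_zero hq hodd hn0 hd (by omega) hea <|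
    Nat.ModEq.add_right_cancel' (S n (q ^ a)) (by simpa using (S_add_modEq n _ _).symm.trans hgcd_period)
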